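/- Let S be a UPB in H₁ ⊗ ... ⊗ Hₙ with projector P_S onto span(S), let ε = min over product unit vectors of ⟨φ, P_S φ⟩ (which is strictly positive), and let C ≥ 0 be any positive operator with c = max over product unit vectors of ⟨φ, C φ⟩ > 0 and Tr(P_S^⊥ C) > 0. Then Ã = P_S − (ε/c) C satisfies Tr(Ã (P₁ ⊗ ... ⊗ Pₙ)) ≥ 0 for all rank-one product projections, while Tr(Ã ρ_UPB) < 0 for ρ_UPB = P_S^⊥ / Tr(P_S^⊥). Hence Ã is an entanglement witness detecting the bound entangled state ρ_UPB. -/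

import Mathlib

/-!
`P_S` is the orthogonal projector onto the span of the orthonormal family `S`, so
`⟨φ, P_S φ⟩ = ∑ⱼ |⟨sⱼ, φ⟩|²`, which unextendibility makes positive on every product unit vector;
hence `ε > 0`. On a product unit vector `φ` we then have
`⟨φ, Ã φ⟩ ≥ ε - (ε/c)·⟨φ, C φ⟩ ≥ ε - (ε/c)·c = 0`.
Since `P_S P_S^⊥ = 0`, `Tr(Ã P_S^⊥) = -(ε/c)·Tr(P_S^⊥ C)`, and `Tr P_S^⊥ > 0` because `P_S^⊥` is a
nonzero orthogonal projector, so `Tr(Ã ρ_UPB) < 0`.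
-/

open Matrix
open scoped ComplexOrder

noncomputable section

/-- A state: positive semidefinite with trace one. -/
def IsState {n : Type*} [Fintype n] (ρ : Matrix n n ℂ) : Prop :=
  ρ.PosSemidef ∧ ρ.trace = 1

/-- Tensor product of a family of matrices. -/
def famTensor {n : ℕ} {d : Fin n → ℕ} (M : ∀ i, Matrix (Fin (d i)) (Fin (d i)) ℂ) :
    Matrix (∀ i, Fin (d i)) (∀ i, Fin (d i)) ℂ :=
  Matrix.of fun f g => ∏ i, M i (f i) (g i)

/-- Tensor product `φ¹ ⊗ ... ⊗ φⁿ` of a family of vectors. -/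
def productVec {n : ℕ} {d : Fin n → ℕ} (φ : ∀ i, Fin (d i) → ℂ) :
    (∀ i, Fin (d i)) → ℂ :=
  fun f => ∏ i, φ i (f i)

/-- The rank-one operator `|v⟩⟨v|`. -/
def outer {m : Type*} (v : m → ℂ) : Matrix m m ℂ := Matrix.vecMulVec v (star v)

/-- An n-partite separable state: a convex combination of n-fold product states. -/
def SepN {n : ℕ} {d : Fin n → ℕ} (ρ : Matrix (∀ i, Fin (d i)) (∀ i, Fin (d i)) ℂ) : Prop :=
  ∃ (k : ℕ) (p : Fin k → ℝ) (σ : Fin k → ∀ i, Matrix (Fin (d i)) (Fin (d i)) ℂ),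
    (∀ j, 0 ≤ p j) ∧ (∑ j, p j = 1) ∧ (∀ j i, IsState (σ j i)) ∧
    ρ = ∑ j, (p j : ℂ) • famTensor (σ j)

/-- A rank-one (orthogonal) projection `|v⟩⟨v|`, `v` a unit vector. -/
def IsRankOneProj {m : Type*} [Fintype m] (P : Matrix m m ℂ) : Prop :=
  ∃ v : m → ℂ, star v ⬝ᵥ v = 1 ∧ P = Matrix.vecMulVec v (star v)

section Outer

variable {ι κ : Type*} [Fintype κ]

lemma trace_mul_outer [Fintype ι] (A : Matrix ι ι ℂ) (u : ι → ℂ) :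
    (A * outer u).trace = star u ⬝ᵥ (A *ᵥ u) := by
  rw [outer, mul_vecMulVec, trace_vecMulVec, dotProduct_comm]

lemma isHermitian_sum_outer (w : κ → ι → ℂ) : (∑ j, outer (w j)).IsHermitian := by
  simp only [IsHermitian, conjTranspose_sum, outer, conjTranspose_vecMulVec, star_star]

lemma isIdempotentElem_sum_outer [Fintype ι] [DecidableEq κ] {w : κ → ι → ℂ}
    (hw : ∀ j k, star (w j) ⬝ᵥ w k = if j = k then 1 else 0) :
    IsIdempotentElem (∑ j, outer (w j)) := by
  have hterm : ∀ j k, outer (w j) * outer (w k) = if j = k then outer (w j) else 0 := by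
    intro j k
    rw [outer, outer, vecMulVec_mul_vecMulVec, hw]
    split_ifs with h <;> simp [h]
  simp [IsIdempotentElem, Finset.sum_mul, Finset.mul_sum, hterm]

lemma re_dotProduct_sum_outer_mulVec [Fintype ι] (w : κ → ι → ℂ) (u : ι → ℂ) :
    (star u ⬝ᵥ ((∑ j, outer (w j)) *ᵥ u)).re = ∑ j, Complex.normSq (star (w j) ⬝ᵥ u) := by
  have hterm : ∀ j, star u ⬝ᵥ (outer (w j) *ᵥ u) = Complex.normSq (star (w j) ⬝ᵥ u) := by
    intro j
    rw [outer, vecMulVec_mulVec, op_smul_eq_smul, dotProduct_smul, smul_eq_mul,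
      star_dotProduct u (w j), Complex.star_def, Complex.mul_conj]
  simp only [sum_mulVec, dotProduct_sum, hterm, ← Complex.ofReal_sum, Complex.ofReal_re]

lemma re_dotProduct_sum_outer_mulVec_pos [Fintype ι] {w : κ → ι → ℂ} {u : ι → ℂ} {j : κ}
    (hj : star (w j) ⬝ᵥ u ≠ 0) : 0 < (star u ⬝ᵥ ((∑ j, outer (w j)) *ᵥ u)).re := by
  rw [re_dotProduct_sum_outer_mulVec]
  exact (Complex.normSq_pos.2 hj).trans_le
    (Finset.single_le_sum (f := fun k => Complex.normSq (star (w k) ⬝ᵥ u))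
      (fun k _ => Complex.normSq_nonneg _) (Finset.mem_univ j))

lemma re_dotProduct_sub_div_smul_mulVec_nonneg [Fintype ι] {A B : Matrix ι ι ℂ}
    {u : ι → ℂ} {ε c : ℝ} (hε : 0 ≤ ε) (hc : 0 < c) (hA : ε ≤ (star u ⬝ᵥ (A *ᵥ u)).re)
    (hB : (star u ⬝ᵥ (B *ᵥ u)).re ≤ c) :
    0 ≤ (star u ⬝ᵥ ((A - ((ε / c : ℝ) : ℂ) • B) *ᵥ u)).re := by
  rw [sub_mulVec, dotProduct_sub, smul_mulVec, dotProduct_smul, smul_eq_mul, Complex.sub_re,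
    Complex.re_ofReal_mul]
  have : ε / c * (star u ⬝ᵥ (B *ᵥ u)).re ≤ ε :=
    calc _ ≤ ε / c * c := by gcongr
      _ = ε := div_mul_cancel₀ ε hc.ne'
  linarith

end Outer

lemma Matrix.IsHermitian.trace_pos_of_isIdempotentElem {𝕜 ι : Type*} [RCLike 𝕜] [Fintype ι]
    {Q : Matrix ι ι 𝕜} (hQ : Q.IsHermitian) (hQQ : IsIdempotentElem Q) (hne : Q ≠ 0) :
    0 < Q.trace := by
  have hpsd : Q.PosSemidef := by
    simpa [hQ.eq, hQQ.eq] using posSemidef_conjTranspose_mul_self Q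
  exact hpsd.trace_nonneg.lt_of_ne fun h => hne (hpsd.trace_eq_zero_iff.1 h.symm)

section Product

variable {n : ℕ} {d : Fin n → ℕ}

lemma star_productVec_dotProduct_productVec (φ ψ : ∀ i, Fin (d i) → ℂ) :
    star (productVec φ) ⬝ᵥ productVec ψ = ∏ i, star (φ i) ⬝ᵥ ψ i := by
  simp only [dotProduct, Pi.star_apply, productVec, star_prod]
  rw [Fintype.prod_sum (fun i j => star (φ i j) * ψ i j)]
  exact Finset.sum_congr rfl fun f _ => Finset.prod_mul_distrib.symm

lemma productVec_ne_zero {φ : ∀ i, Fin (d i) → ℂ} (hφ : ∀ i, star (φ i) ⬝ᵥ φ i = 1) :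
    productVec φ ≠ 0 := by
  intro h
  simpa [h, hφ] using star_productVec_dotProduct_productVec φ φ

lemma famTensor_vecMulVec_star (w : ∀ i, Fin (d i) → ℂ) :
    famTensor (fun i => vecMulVec (w i) (star (w i))) = outer (productVec w) := by
  ext f g
  simp only [famTensor, of_apply, vecMulVec_apply, Pi.star_apply, outer, productVec, star_prod,
    Finset.prod_mul_distrib]

lemma exists_famTensor_eq_outer_productVec {P : ∀ i, Matrix (Fin (d i)) (Fin (d i)) ℂ}
    (hP : ∀ i, IsRankOneProj (P i)) :
    ∃ w : ∀ i, Fin (d i) → ℂ, (∀ i, star (w i) ⬝ᵥ w i = 1) ∧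
      famTensor P = outer (productVec w) := by
  choose w hw hPw using hP
  exact ⟨w, hw, funext hPw ▸ famTensor_vecMulVec_star w⟩

end Product

theorem stmt18_general {n m : ℕ} {d : Fin n → ℕ}
    (v : Fin m → ∀ i, Fin (d i) → ℂ)
    (horth : ∀ j k, star (productVec (v j)) ⬝ᵥ productVec (v k)
      = if j = k then 1 else 0)
    (hunext : ∀ φ : ∀ i, Fin (d i) → ℂ, productVec φ ≠ 0 →
      ∃ j, star (productVec (v j)) ⬝ᵥ productVec φ ≠ 0)
    (PS Pperp : Matrix (∀ i, Fin (d i)) (∀ i, Fin (d i)) ℂ)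
    (hPS : PS = ∑ j, outer (productVec (v j)))
    (hPperp : Pperp = 1 - PS)
    (C : Matrix (∀ i, Fin (d i)) (∀ i, Fin (d i)) ℂ)
    (ε c : ℝ)
    (hε : IsLeast {r : ℝ | ∃ φ : ∀ i, Fin (d i) → ℂ,
      (∀ i, star (φ i) ⬝ᵥ φ i = 1) ∧
      r = (star (productVec φ) ⬝ᵥ (PS *ᵥ productVec φ)).re} ε)
    (hc : IsGreatest {r : ℝ | ∃ φ : ∀ i, Fin (d i) → ℂ,
      (∀ i, star (φ i) ⬝ᵥ φ i = 1) ∧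
      r = (star (productVec φ) ⬝ᵥ (C *ᵥ productVec φ)).re} c)
    (hcpos : 0 < c)
    (htr : 0 < ((Pperp * C).trace).re)
    (Atil ρUPB : Matrix (∀ i, Fin (d i)) (∀ i, Fin (d i)) ℂ)
    (hAtil : Atil = PS - ((ε / c : ℝ) : ℂ) • C)
    (hρ : ρUPB = (Pperp.trace)⁻¹ • Pperp) :
    0 < ε ∧
    (∀ P : ∀ i, Matrix (Fin (d i)) (Fin (d i)) ℂ,
      (∀ i, IsRankOneProj (P i)) → 0 ≤ ((Atil * famTensor P).trace).re) ∧
    ((Atil * ρUPB).trace).re < 0 := by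
  have hPS_idem : IsIdempotentElem PS := hPS ▸ isIdempotentElem_sum_outer horth
  have hPS_herm : PS.IsHermitian := hPS ▸ isHermitian_sum_outer _
  have hεpos : 0 < ε := by
    obtain ⟨φ, hφ, rfl⟩ := hε.1
    obtain ⟨j, hj⟩ := hunext φ (productVec_ne_zero hφ)
    exact hPS ▸ re_dotProduct_sum_outer_mulVec_pos hj
  refine ⟨hεpos, fun P hP => ?_, ?_⟩
  · obtain ⟨w, hw, hPw⟩ := exists_famTensor_eq_outer_productVec hP
    rw [hPw, trace_mul_outer, hAtil]
    exact re_dotProduct_sub_div_smul_mulVec_nonneg hεpos.le hcpos (hε.2 ⟨w, hw, rfl⟩)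
      (hc.2 ⟨w, hw, rfl⟩)
  · have hPperp_herm : Pperp.IsHermitian := hPperp ▸ isHermitian_one.sub hPS_herm
    have hPperp_ne : Pperp ≠ 0 := by
      rintro rfl
      simp at htr
    obtain ⟨t, ht, htrace⟩ : ∃ t : ℝ, 0 < t ∧ (t : ℂ) = Pperp.trace :=
      RCLike.pos_iff_exists_ofReal.1 <|
      hPperp_herm.trace_pos_of_isIdempotentElem (hPperp ▸ hPS_idem.one_sub) hPperp_ne
    have hAPperp : Atil * Pperp = -(((ε / c : ℝ) : ℂ) • (C * Pperp)) := by
      rw [hAtil, sub_mul, hPperp, hPS_idem.mul_one_sub_self, smul_mul, zero_sub]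
    rw [hρ, Matrix.mul_smul, trace_smul, hAPperp, trace_neg, trace_smul, trace_mul_comm C,
      ← htrace, smul_eq_mul, smul_eq_mul, mul_neg, Complex.neg_re, ← Complex.ofReal_inv,
      Complex.re_ofReal_mul, Complex.re_ofReal_mul]
    exact neg_neg_of_pos (mul_pos (inv_pos.2 ht) (mul_pos (div_pos hεpos hcpos) htr))

/-- `Ã = P_S − (ε/c) C` built from a UPB is an entanglement witness
detecting the bound entangled state `ρ_UPB = P_S^⊥ / Tr(P_S^⊥)`. -/
theorem stmt18 {n m : ℕ} {d : Fin n → ℕ} (hd : ∀ i, 0 < d i)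
    (v : Fin m → ∀ i, Fin (d i) → ℂ)
    (horth : ∀ j k, star (productVec (v j)) ⬝ᵥ productVec (v k)
      = if j = k then 1 else 0)
    (hunext : ∀ φ : ∀ i, Fin (d i) → ℂ, productVec φ ≠ 0 →
      ∃ j, star (productVec (v j)) ⬝ᵥ productVec φ ≠ 0)
    (PS Pperp : Matrix (∀ i, Fin (d i)) (∀ i, Fin (d i)) ℂ)
    (hPS : PS = ∑ j, outer (productVec (v j)))
    (hPperp : Pperp = 1 - PS)
    (C : Matrix (∀ i, Fin (d i)) (∀ i, Fin (d i)) ℂ) (hC : C.PosSemidef)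
    (ε c : ℝ)
    (hε : IsLeast {r : ℝ | ∃ φ : ∀ i, Fin (d i) → ℂ,
      (∀ i, star (φ i) ⬝ᵥ φ i = 1) ∧
      r = (star (productVec φ) ⬝ᵥ (PS *ᵥ productVec φ)).re} ε)
    (hc : IsGreatest {r : ℝ | ∃ φ : ∀ i, Fin (d i) → ℂ,
      (∀ i, star (φ i) ⬝ᵥ φ i = 1) ∧
      r = (star (productVec φ) ⬝ᵥ (C *ᵥ productVec φ)).re} c)
    (hcpos : 0 < c)
    (htr : 0 < ((Pperp * C).trace).re)
    (Atil ρUPB : Matrix (∀ i, Fin (d i)) (∀ i, Fin (d i)) ℂ)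
    (hAtil : Atil = PS - ((ε / c : ℝ) : ℂ) • C)
    (hρ : ρUPB = (Pperp.trace)⁻¹ • Pperp) :
    0 < ε ∧
    (∀ P : ∀ i, Matrix (Fin (d i)) (Fin (d i)) ℂ,
      (∀ i, IsRankOneProj (P i)) → 0 ≤ ((Atil * famTensor P).trace).re) ∧
    ((Atil * ρUPB).trace).re < 0 :=
  stmt18_general v horth hunext PS Pperp hPS hPperp C ε c hε hc hcpos htr Atil ρUPB hAtil hρ
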